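/- arXiv:2403.15686 — 3 statements merged into one kernel-verified Lean document; each statement's English description precedes it below -/
import Mathlib

section
/- Let E be a finite-dimensional real vector space and P = ⋂_{i∈I} {x ∈ E : fᵢ(x) ≤ cᵢ} a nonempty polyhedron, where I is a finite index set, the fᵢ are linear functionals, and cᵢ ∈ ℝ. Let J = {i ∈ I : there exists x ∈ P with fᵢ(x) < cᵢ}. Then the intrinsic interior (relative interior) of P is {x ∈ P : fᵢ(x) < cᵢ for all i ∈ J}, and consequently the intrinsic frontier (relative boundary) of P is ⋃_{i∈J} {x ∈ P : fᵢ(x) = cᵢ}, i.e. the union of the proper exposed faces of P cut out by the non-redundant defining inequalities. -/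
/-!
An inequality `f i ≤ c i` that is strict at some `z ∈ P` is strict at every point `y` of the
intrinsic interior: the segment from `z` through `y` can be prolonged slightly beyond `y` inside
`P`, and an affine function equal to `c i` at `y` and below it at `z` exceeds `c i` there.
Conversely, the inequalities that are tight on all of `P` stay tight on its affine span, so inside
that span `P` contains the open set cut out by the remaining inequalities taken strictly.
-/

open Filter Topology

theorem AffineMap.apply_eq_of_mem_affineSpan {k V₁ P₁ V₂ P₂ : Type*} [Ring k]
    [AddCommGroup V₁] [Module k V₁] [AddTorsor V₁ P₁] [AddCommGroup V₂] [Module k V₂]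
    [AddTorsor V₂ P₂] (φ : P₁ →ᵃ[k] P₂) {s : Set P₁} {b : P₂} (hs : ∀ x ∈ s, φ x = b)
    {y : P₁} (hy : y ∈ affineSpan k s) : φ y = b := by
  have hφy : φ y ∈ affineSpan k (φ '' s) :=
    AffineSubspace.map_span φ s ▸ AffineSubspace.mem_map_of_mem φ hy
  have himage : φ '' s ⊆ {b} := Set.image_subset_iff.2 hs
  exact (AffineSubspace.mem_affineSpan_singleton k _).1 (affineSpan_mono k himage hφy)

section IntrinsicInterior

variable {𝕜 V P : Type*} [Ring 𝕜] [AddCommGroup V] [Module 𝕜 V] [TopologicalSpace P]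
  [AddTorsor V P] {s U : Set P} {x y z : P}

theorem mem_intrinsicInterior_of_isOpen (hU : IsOpen U) (hxU : x ∈ U)
    (hx : x ∈ affineSpan 𝕜 s) (hUs : U ∩ affineSpan 𝕜 s ⊆ s) : x ∈ intrinsicInterior 𝕜 s :=
  ⟨⟨x, hx⟩, mem_interior.2 ⟨((↑) : affineSpan 𝕜 s → P) ⁻¹' U, fun y hy => hUs ⟨hy, y.2⟩,
    hU.preimage continuous_subtype_val, hxU⟩, rfl⟩

variable [TopologicalSpace 𝕜] [TopologicalSpace V] [ContinuousSMul 𝕜 V] [IsTopologicalAddTorsor P]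

theorem eventually_lineMap_mem_of_mem_intrinsicInterior (hy : y ∈ intrinsicInterior 𝕜 s)
    (hz : z ∈ s) : ∀ᶠ t in 𝓝 (1 : 𝕜), AffineMap.lineMap z y t ∈ s := by
  obtain ⟨y, hy, rfl⟩ := hy
  have hz' : z ∈ affineSpan 𝕜 s := subset_affineSpan 𝕜 s hz
  let line : 𝕜 → affineSpan 𝕜 s := fun t =>
    ⟨AffineMap.lineMap z y t, AffineMap.lineMap_mem t hz' y.2⟩
  have hline : Continuous line := AffineMap.lineMap_continuous.subtype_mk _
  have hline1 : line 1 = y := Subtype.ext (AffineMap.lineMap_apply_one _ _)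
  have hnhds := hline.continuousAt.preimage_mem_nhds (hline1 ▸ isOpen_interior.mem_nhds hy)
  exact mem_of_superset hnhds fun t ht =>
    interior_subset (s := ((↑) : affineSpan 𝕜 s → P) ⁻¹' s) ht

end IntrinsicInterior

theorem AffineMap.lt_of_mem_intrinsicInterior {V P : Type*} [AddCommGroup V] [Module ℝ V]
    [TopologicalSpace V] [ContinuousSMul ℝ V] [TopologicalSpace P] [AddTorsor V P]
    [IsTopologicalAddTorsor P] (g : P →ᵃ[ℝ] ℝ) {s : Set P} {c : ℝ} (hs : ∀ x ∈ s, g x ≤ c)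
    {z : P} (hz : z ∈ s) (hzc : g z < c) {y : P} (hy : y ∈ intrinsicInterior ℝ s) :
    g y < c := by
  obtain ⟨t, hts, ht⟩ := ((eventually_lineMap_mem_of_mem_intrinsicInterior hy hz).filter_mono
    nhdsWithin_le_nhds |>.and (self_mem_nhdsWithin (s := Set.Ioi 1))).exists
  by_contra! hyc
  have hline := hs _ hts
  rw [AffineMap.apply_lineMap, AffineMap.lineMap_apply_ring'] at hline
  nlinarith [mul_lt_mul_of_pos_left (sub_pos.2 hzc) (sub_pos.2 (Set.mem_Ioi.1 ht))]

section Polyhedron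

variable {E : Type*} [NormedAddCommGroup E] [NormedSpace ℝ E] [FiniteDimensional ℝ E]

theorem intrinsicInterior_eq_of_eq_iInter {I : Type*} [Finite I] {f : I → E →ₗ[ℝ] ℝ}
    {c : I → ℝ} {P : Set E} (hP : P = ⋂ i, {x | f i x ≤ c i}) :
    intrinsicInterior ℝ P = {x ∈ P | ∀ i, (∃ z ∈ P, f i z < c i) → f i x < c i} := by
  have hmemP : ∀ {x}, x ∈ P ↔ ∀ i, f i x ≤ c i := by subst hP; exact Set.mem_iInter
  refine subset_antisymm (fun y hy => ⟨intrinsicInterior_subset hy, fun i ⟨z, hz, hzc⟩ =>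
    (f i).toAffineMap.lt_of_mem_intrinsicInterior (fun x hx => hmemP.1 hx i) hz hzc hy⟩) ?_
  rintro x ⟨hxP, hxJ⟩
  have htight : ∀ i, (¬∃ z ∈ P, f i z < c i) → ∀ y ∈ affineSpan ℝ P, f i y = c i :=
    fun i hi y hy => (f i).toAffineMap.apply_eq_of_mem_affineSpan
      (fun z hz => (hmemP.1 hz i).antisymm (not_lt.1 fun h => hi ⟨z, hz, h⟩)) hy
  refine mem_intrinsicInterior_of_isOpen
    (U := ⋂ i ∈ {i | ∃ z ∈ P, f i z < c i}, {x | f i x < c i}) ?_ (Set.mem_iInter₂.2 hxJ)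
    (subset_affineSpan ℝ P hxP) ?_
  · exact (Set.toFinite _).isOpen_biInter fun i _ =>
      isOpen_lt (f i).continuous_of_finiteDimensional continuous_const
  · rintro y ⟨hyU, hyS⟩
    refine hmemP.2 fun i => ?_
    by_cases hi : ∃ z ∈ P, f i z < c i
    · exact (Set.mem_iInter₂.1 hyU i hi).le
    · exact (htight i hi y hyS).le

theorem intrinsicFrontier_eq_biUnion_of_intrinsicInterior_eq {ι : Type*} {s : Set E}
    (hs : IsClosed s) {g : ι → E → ℝ} {c : ι → ℝ} (hg : ∀ i, ∀ x ∈ s, g i x ≤ c i) {J : Set ι}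
    (h : intrinsicInterior ℝ s = {x ∈ s | ∀ i ∈ J, g i x < c i}) :
    intrinsicFrontier ℝ s = ⋃ i ∈ J, {x ∈ s | g i x = c i} := by
  rw [← closure_sdiff_intrinsicInterior, hs.closure_eq, h]
  ext x
  simp only [Set.mem_sdiff, Set.mem_ofPred_eq, Set.mem_iUnion, exists_prop, not_and, not_forall,
    not_lt]
  constructor
  · rintro ⟨hx, hJ⟩
    obtain ⟨i, hi, hle⟩ := hJ hx
    exact ⟨i, hi, hx, (hg i x hx).antisymm hle⟩
  · rintro ⟨i, hi, hx, hxc⟩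
    exact ⟨hx, fun _ => ⟨i, hi, hxc.ge⟩⟩

end Polyhedron

theorem intrinsicInterior_intrinsicFrontier_polyhedron_general
    {E : Type*} [NormedAddCommGroup E] [NormedSpace ℝ E] [FiniteDimensional ℝ E]
    {I : Type*} [Fintype I] (f : I → (E →ₗ[ℝ] ℝ)) (c : I → ℝ)
    (P : Set E) (hP : P = ⋂ i, {x : E | f i x ≤ c i})
    (J : Set I) (hJ : J = {i : I | ∃ x ∈ P, f i x < c i}) :
    intrinsicInterior ℝ P = {x ∈ P | ∀ i ∈ J, f i x < c i} ∧
      intrinsicFrontier ℝ P = ⋃ i ∈ J, {x ∈ P | f i x = c i} := by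
  subst hJ
  have hint := intrinsicInterior_eq_of_eq_iInter hP
  subst hP
  have hclosed : IsClosed (⋂ i, {x : E | f i x ≤ c i}) :=
    isClosed_iInter fun i => isClosed_le (f i).continuous_of_finiteDimensional continuous_const
  exact ⟨hint, intrinsicFrontier_eq_biUnion_of_intrinsicInterior_eq hclosed
    (fun i _ hx => Set.mem_iInter.1 hx i) hint⟩

/-- The relative interior of a nonempty polyhedron is the set of points of the polyhedron
satisfying all non-redundant defining inequalities strictly, and consequently the relative
boundary is the union of the proper exposed faces cut out by these inequalities. -/
theorem intrinsicInterior_intrinsicFrontier_polyhedron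
    {E : Type*} [NormedAddCommGroup E] [NormedSpace ℝ E] [FiniteDimensional ℝ E]
    {I : Type*} [Fintype I] (f : I → (E →ₗ[ℝ] ℝ)) (c : I → ℝ)
    (P : Set E) (hP : P = ⋂ i, {x : E | f i x ≤ c i}) (hne : P.Nonempty)
    (J : Set I) (hJ : J = {i : I | ∃ x ∈ P, f i x < c i}) :
    intrinsicInterior ℝ P = {x ∈ P | ∀ i ∈ J, f i x < c i} ∧
      intrinsicFrontier ℝ P = ⋃ i ∈ J, {x ∈ P | f i x = c i} :=
  intrinsicInterior_intrinsicFrontier_polyhedron_general f c P hP J hJ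
end

section
/- Let E and F be finite-dimensional real vector spaces, P ⊆ E a nonempty polyhedron that contains no affine line (i.e. there is no x ∈ E and v ≠ 0 with x + tv ∈ P for all t ∈ ℝ), and g : E → F an affine map with linear part L. Suppose there exists a nonzero vector v in the direction space of the affine span of P with L(v) = 0. Then g(P) = g(intrinsicFrontier(P)); i.e. every value of g on P is already attained on the relative boundary of P. (This is the lemma by which the paper replaces a face W of the skeleton with a smaller face while preserving the image of α: since the skeleton of a strictly semistable pair contains no lines, α(W) = α(∂W) whenever dα has nontrivial kernel along W.) -/
open Set

/-- The parameter set `{t | x + t • v ∈ s}` is a nonempty proper subset of the connected line `ℝ`,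
so it has a frontier point `t`; the line `t ↦ x + t • v` runs inside the affine span of `s` and is
continuous there, so it sends `t` to an intrinsic frontier point of `s`. -/
theorem exists_add_smul_mem_intrinsicFrontier {E : Type*} [AddCommGroup E] [Module ℝ E]
    [TopologicalSpace E] [ContinuousAdd E] [ContinuousSMul ℝ E] {s : Set E} {x v : E}
    (hx : x ∈ s) (hv : v ∈ (affineSpan ℝ s).direction) (hline : ¬ ∀ t : ℝ, x + t • v ∈ s) :
    ∃ t : ℝ, x + t • v ∈ intrinsicFrontier ℝ s := by
  have hspan (t : ℝ) : x + t • v ∈ affineSpan ℝ s := by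
    rw [add_comm, ← vadd_eq_add]
    exact AffineSubspace.vadd_mem_of_mem_direction ((affineSpan ℝ s).direction.smul_mem t hv)
      (subset_affineSpan ℝ s hx)
  let φ : ℝ → affineSpan ℝ s := fun t => ⟨x + t • v, hspan t⟩
  have hφ : Continuous φ := by fun_prop
  obtain ⟨t, ht⟩ : (frontier (φ ⁻¹' ((↑) ⁻¹' s))).Nonempty :=
    nonempty_frontier_iff.2 ⟨⟨0, by simpa [φ] using hx⟩,
      fun h => hline fun t => (h.symm ▸ mem_univ t : t ∈ φ ⁻¹' ((↑) ⁻¹' s))⟩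
  exact ⟨t, φ t, hφ.frontier_preimage_subset _ ht, rfl⟩

theorem image_eq_image_intrinsicFrontier_general
    {E F : Type*} [NormedAddCommGroup E] [NormedSpace ℝ E] [FiniteDimensional ℝ E]
    [NormedAddCommGroup F] [NormedSpace ℝ F]
    {m : ℕ} (f : Fin m → (E →ₗ[ℝ] ℝ)) (c : Fin m → ℝ)
    (P : Set E) (hP : P = ⋂ i, {x : E | f i x ≤ c i})
    (hlineFree : ¬ ∃ (x v : E), v ≠ 0 ∧ ∀ t : ℝ, x + t • v ∈ P)
    (g : E →ᵃ[ℝ] F)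
    (hker : ∃ v : E, v ≠ 0 ∧ v ∈ (affineSpan ℝ P).direction ∧ g.linear v = 0) :
    g '' P = g '' intrinsicFrontier ℝ P := by
  obtain ⟨v, hv0, hvdir, hvker⟩ := hker
  have hclosed : IsClosed P := hP ▸
    isClosed_iInter fun i => isClosed_le (f i).continuous_of_finiteDimensional continuous_const
  refine (image_mono (intrinsicFrontier_subset hclosed)).antisymm' ?_
  rintro _ ⟨x, hx, rfl⟩
  obtain ⟨t, ht⟩ :=
    exists_add_smul_mem_intrinsicFrontier hx hvdir fun h => hlineFree ⟨x, v, hv0, h⟩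
  refine ⟨x + t • v, ht, ?_⟩
  rw [add_comm, ← vadd_eq_add, g.map_vadd, map_smul, hvker, smul_zero, zero_vadd]

/-- If a nonempty line-free polyhedron `P` admits a nonzero direction vector `v` of its
affine span that is killed by the linear part of an affine map `g`, then every value of `g`
on `P` is already attained on the relative boundary of `P`. -/
theorem image_eq_image_intrinsicFrontier
    {E F : Type*} [NormedAddCommGroup E] [NormedSpace ℝ E] [FiniteDimensional ℝ E]
    [NormedAddCommGroup F] [NormedSpace ℝ F] [FiniteDimensional ℝ F]
    {m : ℕ} (f : Fin m → (E →ₗ[ℝ] ℝ)) (c : Fin m → ℝ)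
    (P : Set E) (hP : P = ⋂ i, {x : E | f i x ≤ c i}) (hne : P.Nonempty)
    (hlineFree : ¬ ∃ (x v : E), v ≠ 0 ∧ ∀ t : ℝ, x + t • v ∈ P)
    (g : E →ᵃ[ℝ] F)
    (hker : ∃ v : E, v ≠ 0 ∧ v ∈ (affineSpan ℝ P).direction ∧ g.linear v = 0) :
    g '' P = g '' intrinsicFrontier ℝ P :=
  image_eq_image_intrinsicFrontier_general f c P hP hlineFree g hker
end

section
/- Let E be a finite-dimensional real vector space, C ⊆ E a nonempty convex set, and C₁, …, C_m ⊆ E finitely many convex sets with C ⊆ C₁ ∪ ⋯ ∪ C_m. Then there exists an index i such that affineSpan(C) ⊆ affineSpan(Cᵢ); in particular, some Cᵢ has dimension at least the dimension of C. (Equivalently: a convex set of dimension k cannot be covered by finitely many convex sets all of dimension less than k; this is used in the paper's inductive argument producing a face of the skeleton whose image under α has full dimension.) -/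
open Module

/-! Induction on the number of affine subspaces covering the convex set `C`: if `C ⊄ A a`,
pick `x ∈ C \ A a`. For `y ∈ C`, infinitely many points of the segment `[x, y]` lie in a single
`A i`, so the whole line through `x` and `y` does; hence `i ≠ a` and `y ∈ A i`, and `A a` can
be dropped from the cover. -/

section

variable {𝕜 : Type*} [Field 𝕜]

theorem AffineSubspace.eq_top_of_nontrivial {Q : AffineSubspace 𝕜 𝕜}
    (hQ : (Q : Set 𝕜).Nontrivial) : Q = ⊤ := by
  obtain ⟨a, ha, b, hb, hab⟩ := hQ
  have hdir : Q.direction = ⊤ :=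
    Ideal.eq_top_of_isUnit_mem _ (Q.vsub_mem_direction hb ha) (sub_ne_zero.2 hab.symm).isUnit
  exact (AffineSubspace.direction_eq_top_iff_of_nonempty ⟨a, ha⟩).1 hdir

variable [LinearOrder 𝕜] [IsStrictOrderedRing 𝕜] {E : Type*} [AddCommGroup E] [Module 𝕜 E]
  {ι : Type*}

theorem exists_mem_affineSubspace_of_segment_subset_biUnion {x y : E} {s : Finset ι}
    {A : ι → AffineSubspace 𝕜 E} (h : segment 𝕜 x y ⊆ ⋃ i ∈ s, (A i : Set E)) :
    ∃ i ∈ s, x ∈ A i ∧ y ∈ A i := by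
  have hIcc :
      Set.Icc (0 : 𝕜) 1 ⊆ ⋃ i ∈ s, ((A i).comap (AffineMap.lineMap x y) : Set 𝕜) := by
    intro t ht
    simpa using h (segment_eq_image_lineMap 𝕜 x y ▸ Set.mem_image_of_mem _ ht)
  obtain ⟨i, hi, hinf⟩ :
      ∃ i ∈ s, ((A i).comap (AffineMap.lineMap x y) : Set 𝕜).Infinite := by
    by_contra! hfin
    exact Set.Icc_infinite zero_lt_one (s.finite_toSet.biUnion hfin |>.subset hIcc)
  have htop := AffineSubspace.eq_top_of_nontrivial hinf.nontrivial
  have hline (t : 𝕜) : AffineMap.lineMap x y t ∈ A i :=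
    AffineSubspace.mem_comap.1 (htop.symm ▸ AffineSubspace.mem_top 𝕜 𝕜 t)
  exact ⟨i, hi, by simpa using hline 0, by simpa using hline 1⟩

theorem Convex.exists_subset_of_subset_biUnion_affineSubspace {C : Set E} (hC : Convex 𝕜 C)
    (hne : C.Nonempty) {s : Finset ι} {A : ι → AffineSubspace 𝕜 E}
    (hcov : C ⊆ ⋃ i ∈ s, (A i : Set E)) : ∃ i ∈ s, C ⊆ A i := by
  classical
  induction s using Finset.induction with
  | empty => simpa using hcov hne.some_mem
  | insert a s _ ih =>
    by_cases hCa : C ⊆ A a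
    · exact ⟨a, s.mem_insert_self a, hCa⟩
    obtain ⟨x, hxC, hxA⟩ := Set.not_subset.1 hCa
    have hcov' : C ⊆ ⋃ i ∈ s, (A i : Set E) := by
      intro y hyC
      obtain ⟨i, hi, hxi, hyi⟩ := exists_mem_affineSubspace_of_segment_subset_biUnion
        ((hC.segment_subset hxC hyC).trans hcov)
      have hia : i ≠ a := by rintro rfl; exact hxA hxi
      exact Set.mem_biUnion ((Finset.mem_insert.1 hi).resolve_left hia) hyi
    obtain ⟨i, hi, hCi⟩ := ih hcov'
    exact ⟨i, Finset.mem_insert_of_mem hi, hCi⟩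

end

theorem convex_cover_affineSpan_general
    {E : Type*} [AddCommGroup E] [Module ℝ E] [FiniteDimensional ℝ E]
    (C : Set E) (hC : Convex ℝ C) (hne : C.Nonempty)
    {m : ℕ} (Cs : Fin m → Set E)
    (hcover : C ⊆ ⋃ i, Cs i) :
    ∃ i, affineSpan ℝ C ≤ affineSpan ℝ (Cs i) ∧
      finrank ℝ (affineSpan ℝ C).direction ≤ finrank ℝ (affineSpan ℝ (Cs i)).direction := by
  have hcov : C ⊆ ⋃ i ∈ Finset.univ, (affineSpan ℝ (Cs i) : Set E) := by
    simpa using hcover.trans (Set.iUnion_mono fun i => subset_affineSpan ℝ (Cs i))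
  obtain ⟨i, -, hCi⟩ := hC.exists_subset_of_subset_biUnion_affineSubspace hne hcov
  have hle : affineSpan ℝ C ≤ affineSpan ℝ (Cs i) := affineSpan_le.2 hCi
  exact ⟨i, hle, Submodule.finrank_mono (AffineSubspace.direction_le hle)⟩

/-- A nonempty convex set covered by finitely many convex sets has its affine span contained
in the affine span of one of them; in particular, one of the covering sets has dimension at
least the dimension of the covered set. -/
theorem convex_cover_affineSpan
    {E : Type*} [AddCommGroup E] [Module ℝ E] [FiniteDimensional ℝ E]
    (C : Set E) (hC : Convex ℝ C) (hne : C.Nonempty)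
    {m : ℕ} (Cs : Fin m → Set E) (hCs : ∀ i, Convex ℝ (Cs i))
    (hcover : C ⊆ ⋃ i, Cs i) :
    ∃ i, affineSpan ℝ C ≤ affineSpan ℝ (Cs i) ∧
      finrank ℝ (affineSpan ℝ C).direction ≤ finrank ℝ (affineSpan ℝ (Cs i)).direction :=
  convex_cover_affineSpan_general C hC hne Cs hcover
end
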